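/- arXiv:q-alg/9507006 — 5 statements merged into one kernel-verified Lean document; each statement's English description precedes it below -/
import Mathlib

section
/- Let k be a field, C a monoidal category, and Z : C ⥤ ModuleCat k a strong monoidal functor such that ⟨Z(f)⟩ ≠ 0 for every endomorphism f : 𝟙 ⟶ 𝟙 and every object X of C admits some morphism X ⟶ 𝟙. Then for every object X and every morphism M : 𝟙 ⟶ X the vector v_Z(M) ∈ Z(X) is nonzero; if moreover Z(X) is one-dimensional over k, then v_Z(M) spans Z(X). -/
open CategoryTheory MonoidalCategory

universe v u

/-! If `v_Z(M) = 0`, then for any `N : X ⟶ 𝟙` the endomorphism `M ≫ N` of `𝟙` sends `ε_Z(1)`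
to `0 = 0 • ε_Z(1)`, so its scalar `⟨Z(M ≫ N)⟩` vanishes. -/

/-- The distinguished vector `ε_Z(1) ∈ Z(𝟙)` determined by the unit isomorphism
`ε_Z : k ≅ Z(𝟙)` of a (strong) monoidal functor `Z : C ⥤ ModuleCat k`. -/
noncomputable def unitVec {k : Type*} [Field k] {C : Type u} [Category.{v} C]
    [MonoidalCategory C] (Z : C ⥤ ModuleCat k) [Z.Monoidal] : Z.obj (𝟙_ C) :=
  Functor.LaxMonoidal.ε Z (1 : k)

/-- `v_Z(M) := Z(M)(ε_Z(1)) ∈ Z(X)` for a morphism `M : 𝟙 ⟶ X`. -/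
noncomputable def vec {k : Type*} [Field k] {C : Type u} [Category.{v} C]
    [MonoidalCategory C] (Z : C ⥤ ModuleCat k) [Z.Monoidal] {X : C} (M : 𝟙_ C ⟶ X) :
    Z.obj X :=
  Z.map M (unitVec Z)

section

variable {k : Type*} [Field k] {C : Type u} [Category.{v} C] [MonoidalCategory C]
  (Z : C ⥤ ModuleCat k) [Z.Monoidal]

theorem vec_comp {X Y : C} (M : 𝟙_ C ⟶ X) (N : X ⟶ Y) :
    vec Z (M ≫ N) = Z.map N (vec Z M) := by
  simp only [vec, Functor.map_comp, ModuleCat.comp_apply]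

theorem vec_ne_zero_of_comp {X Y : C} (M : 𝟙_ C ⟶ X) (N : X ⟶ Y)
    (h : vec Z (M ≫ N) ≠ 0) : vec Z M ≠ 0 := fun hM =>
  h (by rw [vec_comp, hM, map_zero])

theorem vec_ne_zero_of_endo {f : 𝟙_ C ⟶ 𝟙_ C}
    (hf : ∀ c : k, Z.map f (unitVec Z) = c • unitVec Z → c ≠ 0) : vec Z f ≠ 0 := fun h =>
  hf 0 (by rw [zero_smul]; exact h) rfl

end

/-- If every scalar `⟨Z(f)⟩` (defined by `Z(f)(ε_Z(1)) = ⟨Z(f)⟩ • ε_Z(1)`) is nonzero and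
every object admits a morphism to the unit, then every vector `v_Z(M)` is nonzero, and it
spans `Z(X)` whenever `Z(X)` is one-dimensional. -/
theorem vec_ne_zero_and_span {k : Type*} [Field k] {C : Type u} [Category.{v} C]
    [MonoidalCategory C] (Z : C ⥤ ModuleCat k) [Z.Monoidal]
    (hscalar : ∀ (f : 𝟙_ C ⟶ 𝟙_ C) (c : k),
      Z.map f (unitVec Z) = c • unitVec Z → c ≠ 0)
    (hout : ∀ X : C, Nonempty (X ⟶ 𝟙_ C)) :
    ∀ (X : C) (M : 𝟙_ C ⟶ X),
      vec Z M ≠ 0 ∧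
        (Module.finrank k (Z.obj X) = 1 → Submodule.span k {vec Z M} = ⊤) := by
  intro X M
  obtain ⟨N⟩ := hout X
  have hM : vec Z M ≠ 0 := vec_ne_zero_of_comp Z M N (vec_ne_zero_of_endo Z (hscalar _))
  exact ⟨hM, (finrank_eq_one_iff_of_nonzero _ hM).mp⟩
end

section
/- Under hypotheses (H1)–(H3), if M₁, M₂ : 𝟙 ⟶ X are morphisms in C and α ∈ k satisfies v_Z(M₁) = α · v_Z(M₂) in Z(X), then v_{Z'}(M₁) = α · v_{Z'}(M₂) in Z'(X). -/
open CategoryTheory MonoidalCategory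

universe v u

/-- Under (H1)–(H3), a linear relation `v_Z(M₁) = α • v_Z(M₂)` between the vectors of `Z`
implies the same relation `v_{Z'}(M₁) = α • v_{Z'}(M₂)` for `Z'`. -/
theorem vec_rel_transfer {k : Type*} [Field k] {C : Type u} [Category.{v} C]
    [MonoidalCategory C] (Z Z' : C ⥤ ModuleCat k) [Z.Monoidal] [Z'.Monoidal]
    -- (H1): every object admits a morphism from and a morphism to the unit object
    (H1 : ∀ X : C, Nonempty (𝟙_ C ⟶ X) ∧ Nonempty (X ⟶ 𝟙_ C))
    -- (H2): for every `f : 𝟙 ⟶ 𝟙` the scalars `⟨Z(f)⟩` and `⟨Z'(f)⟩` agree and are nonzero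
    (H2 : ∀ f : 𝟙_ C ⟶ 𝟙_ C, ∃ c : k, c ≠ 0 ∧
      Z.map f (unitVec Z) = c • unitVec Z ∧ Z'.map f (unitVec Z') = c • unitVec Z')
    -- (H3): all state spaces are one-dimensional
    (H3 : ∀ X : C, Module.finrank k (Z.obj X) = 1 ∧ Module.finrank k (Z'.obj X) = 1) :
    ∀ (X : C) (M₁ M₂ : 𝟙_ C ⟶ X) (α : k),
      vec Z M₁ = α • vec Z M₂ → vec Z' M₁ = α • vec Z' M₂ := by
  intro X M₁ M₂ α h
  obtain ⟨-, ⟨N⟩⟩ := H1 X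
  obtain ⟨c₁, hc₁, hZ₁, hZ'₁⟩ := H2 (M₁ ≫ N)
  obtain ⟨c₂, hc₂, hZ₂, hZ'₂⟩ := H2 (M₂ ≫ N)
  have hu : unitVec Z ≠ 0 := by
    intro h0
    have h1 : (Functor.Monoidal.εIso Z).inv (unitVec Z) = (1 : k) := by
      show ((Functor.Monoidal.εIso Z).hom ≫ (Functor.Monoidal.εIso Z).inv) (1 : k) = 1
      rw [Iso.hom_inv_id]; rfl
    rw [h0, map_zero] at h1
    exact one_ne_zero h1.symm
  have hu' : unitVec Z' ≠ 0 := by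
    intro h0
    have h1 : (Functor.Monoidal.εIso Z').inv (unitVec Z') = (1 : k) := by
      show ((Functor.Monoidal.εIso Z').hom ≫ (Functor.Monoidal.εIso Z').inv) (1 : k) = 1
      rw [Iso.hom_inv_id]; rfl
    rw [h0, map_zero] at h1
    exact one_ne_zero h1.symm
  have key : ∀ (W : C ⥤ ModuleCat k) [W.Monoidal] (M : 𝟙_ C ⟶ X),
      W.map N (vec W M) = W.map (M ≫ N) (unitVec W) := by
    intro W _ M
    rw [Functor.map_comp]
    rfl
  -- scalar relation c₁ = α * c₂ from Z
  have hscal : c₁ = α * c₂ := by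
    have := congrArg (Z.map N) h
    rw [map_smul, key Z M₁, key Z M₂, hZ₁, hZ₂, smul_smul] at this
    have hz : (c₁ - α * c₂) • unitVec Z = 0 := by
      rw [sub_smul, this, sub_self]
    have h0 := (smul_eq_zero.mp hz).resolve_right hu
    exact sub_eq_zero.mp h0
  -- Z' side
  have h1' : Z'.map N (vec Z' M₁) = c₁ • unitVec Z' := by rw [key Z' M₁, hZ'₁]
  have h2' : Z'.map N (vec Z' M₂) = c₂ • unitVec Z' := by rw [key Z' M₂, hZ'₂]
  have hv1 : vec Z' M₁ ≠ 0 := by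
    intro h0
    rw [h0, map_zero] at h1'
    exact hu' (by simpa [hc₁] using (smul_eq_zero.mp h1'.symm).resolve_left hc₁)
  obtain ⟨s, hs⟩ := (finrank_eq_one_iff_of_nonzero' (vec Z' M₁) hv1).mp (H3 X).2
    (vec Z' M₁ - α • vec Z' M₂)
  have hzero : Z'.map N (vec Z' M₁ - α • vec Z' M₂) = 0 := by
    rw [map_sub, map_smul, h1', h2', smul_smul, hscal, sub_self]
  have this : (0 : Z'.obj (𝟙_ C)) = (s * c₁) • unitVec Z' := by
    rw [← hzero, ← hs, map_smul, h1', smul_smul]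
  have hs0 : s * c₁ = 0 := by
    by_contra hne
    exact hne (by
      rcases smul_eq_zero.mp this.symm with h' | h'
      · exact h'
      · exact absurd h' hu')
  have hs' : s = 0 := by
    rcases mul_eq_zero.mp hs0 with h' | h'
    · exact h'
    · exact absurd h' hc₁
  have := hs
  rw [hs'] at this
  rw [zero_smul] at this
  exact sub_eq_zero.mp this.symm
end

section
/- Under hypotheses (H1)–(H3), for every object X of C there exists a unique k-linear map F_X : Z(X) → Z'(X) satisfying F_X(v_Z(M)) = v_{Z'}(M) for every morphism M : 𝟙 ⟶ X; moreover F_X is a linear isomorphism. -/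
/-!
Fix `M₀ : 𝟙 ⟶ X` and `N : X ⟶ 𝟙` by (H1). Applying `Z(N)` and reading off the scalar in
`Z(𝟙) ≅ k` gives linear functionals on `Z(X)` and `Z'(X)` which, by (H2), take the same nonzero
value `⟨Z(M ≫ N)⟩` on `v_Z(M)` and on `v_{Z'}(M)`. On lines (H3) a nonzero functional is an
isomorphism onto `k`, so `F_X` is forced to be, and can be taken to be, the first functional
followed by the inverse of the second.
-/

open CategoryTheory MonoidalCategory

universe v u

section LinearAlgebra

variable {k V W ι : Type*} [Field k] [AddCommGroup V] [Module k V] [AddCommGroup W] [Module k W]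

theorem LinearMap.bijective_of_finrank_eq_one (hV : Module.finrank k V = 1) {l : V →ₗ[k] k}
    (hl : l ≠ 0) : Function.Bijective l := by
  have : FiniteDimensional k V := .of_finrank_pos (by omega)
  have hsurj : Function.Surjective l := LinearMap.surjective_iff_ne_zero.mpr hl
  exact ⟨(LinearMap.injective_iff_surjective_of_finrank_eq_finrank
    (by rw [hV, Module.finrank_self])).mpr hsurj, hsurj⟩

theorem existsUnique_linearMap_of_functional_eq (hV : Module.finrank k V = 1)
    (hW : Module.finrank k W = 1) (l : V →ₗ[k] k) (l' : W →ₗ[k] k) (v : ι → V) (w : ι → W)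
    (hlw : ∀ i, l (v i) = l' (w i)) (i₀ : ι) (h₀ : l (v i₀) ≠ 0) :
    (∃! F : V →ₗ[k] W, ∀ i, F (v i) = w i) ∧
      ∀ F : V →ₗ[k] W, (∀ i, F (v i) = w i) → Function.Bijective F := by
  have hl : Function.Bijective l :=
    LinearMap.bijective_of_finrank_eq_one hV fun h ↦ h₀ (by rw [h, LinearMap.zero_apply])
  have hl' : Function.Bijective l' :=
    LinearMap.bijective_of_finrank_eq_one hW fun h ↦ h₀ (by rw [hlw, h, LinearMap.zero_apply])
  let e := LinearEquiv.ofBijective l hl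
  let e' := LinearEquiv.ofBijective l' hl'
  let F₀ : V →ₗ[k] W := (e.trans e'.symm).toLinearMap
  have hF₀ : ∀ i, F₀ (v i) = w i := fun i ↦ e'.symm_apply_eq.mpr (hlw i)
  have hv₀ : v i₀ ≠ 0 := fun h ↦ h₀ (by rw [h, map_zero])
  have eq_F₀ : ∀ F : V →ₗ[k] W, (∀ i, F (v i) = w i) → F = F₀ := by
    intro F hF
    ext x
    obtain ⟨a, rfl⟩ := exists_smul_eq_of_finrank_eq_one hV hv₀ x
    rw [map_smul, map_smul, hF, hF₀]
  refine ⟨⟨F₀, hF₀, eq_F₀⟩, fun F hF ↦ ?_⟩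
  rw [eq_F₀ F hF]
  exact (e.trans e'.symm).bijective

end LinearAlgebra

section MonoidalFunctor

variable {k : Type*} [Field k] {C : Type u} [Category.{v} C] [MonoidalCategory C]
  (Z : C ⥤ ModuleCat k) [Z.Monoidal]

theorem eta_unitVec : Functor.OplaxMonoidal.η Z (unitVec Z) = (1 : k) := by
  change (Functor.LaxMonoidal.ε Z ≫ Functor.OplaxMonoidal.η Z) (1 : k) = 1
  rw [Functor.Monoidal.ε_η]
  rfl

theorem map_vec {X Y : C} (M : 𝟙_ C ⟶ X) (N : X ⟶ Y) : Z.map N (vec Z M) = vec Z (M ≫ N) := by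
  rw [vec, vec, Functor.map_comp, ConcreteCategory.comp_apply]

noncomputable def capFunctional {X : C} (N : X ⟶ 𝟙_ C) : Z.obj X →ₗ[k] k :=
  (Functor.OplaxMonoidal.η Z).hom ∘ₗ (Z.map N).hom

theorem capFunctional_vec {X : C} {M : 𝟙_ C ⟶ X} {N : X ⟶ 𝟙_ C} {c : k}
    (h : Z.map (M ≫ N) (unitVec Z) = c • unitVec Z) : capFunctional Z N (vec Z M) = c := by
  change Functor.OplaxMonoidal.η Z (Z.map N (vec Z M)) = c
  rw [map_vec, vec, h, map_smul, eta_unitVec, smul_eq_mul, mul_one]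

end MonoidalFunctor

/-- Under (H1)–(H3), for each object `X` there is a unique linear map
`F_X : Z(X) → Z'(X)` with `F_X (v_Z(M)) = v_{Z'}(M)` for all `M : 𝟙 ⟶ X`; moreover any such
map is a linear isomorphism (i.e. bijective). -/
theorem exists_unique_component {k : Type*} [Field k] {C : Type u} [Category.{v} C]
    [MonoidalCategory C] (Z Z' : C ⥤ ModuleCat k) [Z.Monoidal] [Z'.Monoidal]
    -- (H1): every object admits a morphism from and a morphism to the unit object
    (H1 : ∀ X : C, Nonempty (𝟙_ C ⟶ X) ∧ Nonempty (X ⟶ 𝟙_ C))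
    -- (H2): for every `f : 𝟙 ⟶ 𝟙` the scalars `⟨Z(f)⟩` and `⟨Z'(f)⟩` agree and are nonzero
    (H2 : ∀ f : 𝟙_ C ⟶ 𝟙_ C, ∃ c : k, c ≠ 0 ∧
      Z.map f (unitVec Z) = c • unitVec Z ∧ Z'.map f (unitVec Z') = c • unitVec Z')
    -- (H3): all state spaces are one-dimensional
    (H3 : ∀ X : C, Module.finrank k (Z.obj X) = 1 ∧ Module.finrank k (Z'.obj X) = 1) :
    ∀ X : C,
      (∃! F : Z.obj X →ₗ[k] Z'.obj X, ∀ M : 𝟙_ C ⟶ X, F (vec Z M) = vec Z' M) ∧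
      (∀ F : Z.obj X →ₗ[k] Z'.obj X,
        (∀ M : 𝟙_ C ⟶ X, F (vec Z M) = vec Z' M) → Function.Bijective F) := by
  intro X
  obtain ⟨⟨M₀⟩, ⟨N⟩⟩ := H1 X
  refine existsUnique_linearMap_of_functional_eq (H3 X).1 (H3 X).2
    (capFunctional Z N) (capFunctional Z' N) (vec Z) (vec Z') (fun M ↦ ?_) M₀ ?_
  · obtain ⟨c, -, hZ, hZ'⟩ := H2 (M ≫ N)
    rw [capFunctional_vec Z hZ, capFunctional_vec Z' hZ']
  · obtain ⟨c, hc, hZ, -⟩ := H2 (M₀ ≫ N)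
    rwa [capFunctional_vec Z hZ]
end

section
/- (Abstract form of the paper's Theorem 3.) Under hypotheses (H1)–(H3), the functors Z and Z' are equivalent as monoidal functors: there exists a monoidal natural isomorphism F : Z ≅ Z'. In particular, any two strong monoidal functors C ⥤ ModuleCat k with one-dimensional values which agree and are nonvanishing on all endomorphisms of the unit object are monoidally naturally isomorphic; applied to C = 4Cob, any two TQFTs whose partition function on every closed oriented 4-manifold M is y^{σ(M)} (y ≠ 0) are equivalent, so the BF theory Z with y = exp(−36π²i/Λ) is equivalent to the Crane–Yetter–Broda TQFT. -/
open CategoryTheory MonoidalCategory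

universe v u

/-!
Choose, for each object `X`, morphisms `M : 𝟙 ⟶ X` and `N : X ⟶ 𝟙`. As `⟨Z(M ≫ N)⟩ ≠ 0`, the
vector `v_Z(M)` is nonzero and spans the line `Z(X)`. For any `M' : 𝟙 ⟶ X` the coefficient `a`
in `v_Z(M') = a • v_Z(M)` is `⟨Z(M' ≫ N)⟩ / ⟨Z(M ≫ N)⟩`, which is the same for `Z'`; so there is
a linear isomorphism `F_X : Z(X) ≅ Z'(X)` with `F_X (v_Z(M')) = v_{Z'}(M')` for all `M'`.
Naturality and monoidality of `F` only need checking on these spanning vectors, where they follow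
from `Z(g) (v_Z(f)) = v_Z(f ≫ g)`, `μ (v_Z(f) ⊗ v_Z(g)) = v_Z(λ⁻¹ ≫ (f ⊗ g))` and
`ε_Z(1) = v_Z(𝟙)`.
-/
section

open Functor.LaxMonoidal Functor.OplaxMonoidal Module
open scoped TensorProduct

variable {k : Type*} [Field k]

theorem exists_linearEquiv_apply_eq_of_finrank_eq_one {V W : Type*} [AddCommGroup V]
    [Module k V] [AddCommGroup W] [Module k W] (hV : finrank k V = 1) (hW : finrank k W = 1)
    {v : V} {w : W} (hv : v ≠ 0) (hw : w ≠ 0) : ∃ e : V ≃ₗ[k] W, e v = w := by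
  let eV := (LinearEquiv.toSpanNonzeroSingleton k V v hv).trans
    (LinearEquiv.ofTop _ ((finrank_eq_one_iff_of_nonzero v hv).mp hV))
  let eW := (LinearEquiv.toSpanNonzeroSingleton k W w hw).trans
    (LinearEquiv.ofTop _ ((finrank_eq_one_iff_of_nonzero w hw).mp hW))
  refine ⟨eV.symm.trans eW, ?_⟩
  have hv1 : eV 1 = v := by simp [eV]
  have hw1 : eW 1 = w := by simp [eW]
  rw [LinearEquiv.trans_apply, ← hv1, LinearEquiv.symm_apply_apply, hw1]

theorem TensorProduct.ext_on_range {M N P ι κ : Type*} [AddCommGroup M] [Module k M]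
    [AddCommGroup N] [Module k N] [AddCommGroup P] [Module k P] {v : ι → M} {w : κ → N}
    (hv : Submodule.span k (Set.range v) = ⊤) (hw : Submodule.span k (Set.range w) = ⊤)
    {f g : M ⊗[k] N →ₗ[k] P} (h : ∀ i j, f (v i ⊗ₜ w j) = g (v i ⊗ₜ w j)) : f = g :=
  TensorProduct.ext <| LinearMap.ext_on_range hv fun i => LinearMap.ext_on_range hw (h i)

variable {C : Type u} [Category.{v} C] [MonoidalCategory C]

theorem unitVec_ne_zero (Z : C ⥤ ModuleCat k) [Z.Monoidal] : unitVec Z ≠ 0 := by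
  intro h
  have h1 : η Z (unitVec Z) = 1 := ConcreteCategory.congr_hom (Functor.Monoidal.ε_η (F := Z)) 1
  rw [h, map_zero] at h1
  exact zero_ne_one h1

section StateVec

variable (Z : C ⥤ ModuleCat k) [Z.Monoidal]

noncomputable def stateVec {X : C} (f : 𝟙_ C ⟶ X) : Z.obj X := Z.map f (unitVec Z)

theorem stateVec_id : stateVec Z (𝟙 (𝟙_ C)) = unitVec Z := by
  simp [stateVec]

theorem stateVec_comp {X Y : C} (f : 𝟙_ C ⟶ X) (g : X ⟶ Y) :
    stateVec Z (f ≫ g) = Z.map g (stateVec Z f) := by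
  simp [stateVec]

theorem μ_stateVec_tmul {X Y : C} (f : 𝟙_ C ⟶ X) (g : 𝟙_ C ⟶ Y) :
    μ Z X Y (stateVec Z f ⊗ₜ stateVec Z g) = stateVec Z ((λ_ (𝟙_ C)).inv ≫ (f ⊗ₘ g)) := by
  have hunit : μ Z (𝟙_ C) (𝟙_ C) (unitVec Z ⊗ₜ unitVec Z) = stateVec Z (λ_ (𝟙_ C)).inv :=
    ConcreteCategory.congr_hom (left_unitality_inv Z (𝟙_ C)) (unitVec Z)
  rw [stateVec_comp, ← hunit]
  exact ConcreteCategory.congr_hom (μ_natural Z f g) (unitVec Z ⊗ₜ unitVec Z)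

theorem stateVec_ne_zero_of_comp_eq_smul {X : C} {f : 𝟙_ C ⟶ X} {g : X ⟶ 𝟙_ C} {c : k}
    (hc : c ≠ 0) (h : stateVec Z (f ≫ g) = c • unitVec Z) : stateVec Z f ≠ 0 := by
  intro hf
  rw [stateVec_comp, hf, map_zero] at h
  exact smul_ne_zero hc (unitVec_ne_zero Z) h.symm

theorem span_range_stateVec_eq_top {X : C} (hX : finrank k (Z.obj X) = 1) {f : 𝟙_ C ⟶ X}
    (hf : stateVec Z f ≠ 0) : Submodule.span k (Set.range (stateVec Z (X := X))) = ⊤ :=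
  top_le_iff.mp <| ((finrank_eq_one_iff_of_nonzero _ hf).mp hX).ge.trans <|
    Submodule.span_mono (Set.singleton_subset_iff.mpr ⟨f, rfl⟩)

end StateVec

section Transfer

variable (Z Z' : C ⥤ ModuleCat k) [Z.Monoidal] [Z'.Monoidal]

theorem stateVec_eq_smul_of_stateVec_eq_smul
    (H2 : ∀ h : 𝟙_ C ⟶ 𝟙_ C, ∃ c : k, c ≠ 0 ∧
      stateVec Z h = c • unitVec Z ∧ stateVec Z' h = c • unitVec Z')
    {X : C} (hX : finrank k (Z'.obj X) = 1) (N : X ⟶ 𝟙_ C) {f g : 𝟙_ C ⟶ X} {a : k}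
    (h : stateVec Z f = a • stateVec Z g) : stateVec Z' f = a • stateVec Z' g := by
  obtain ⟨c, -, hfZ, hfZ'⟩ := H2 (f ≫ N)
  obtain ⟨d, hd, hgZ, hgZ'⟩ := H2 (g ≫ N)
  obtain ⟨b, hb⟩ := (finrank_eq_one_iff_of_nonzero' _
    (stateVec_ne_zero_of_comp_eq_smul Z' hd hgZ')).mp hX (stateVec Z' f)
  have hca : c • unitVec Z = (a * d) • unitVec Z := by
    rw [← hfZ, stateVec_comp, h, map_smul, ← stateVec_comp, hgZ, smul_smul]
  have hcb : c • unitVec Z' = (b * d) • unitVec Z' := by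
    rw [← hfZ', stateVec_comp, ← hb, map_smul, ← stateVec_comp, hgZ', smul_smul]
  have hab : b = a := mul_right_cancel₀ hd <|
    (smul_left_injective k (unitVec_ne_zero Z') hcb).symm.trans
      (smul_left_injective k (unitVec_ne_zero Z) hca)
  rw [← hb, hab]

theorem exists_linearEquiv_map_stateVec
    (H2 : ∀ h : 𝟙_ C ⟶ 𝟙_ C, ∃ c : k, c ≠ 0 ∧
      stateVec Z h = c • unitVec Z ∧ stateVec Z' h = c • unitVec Z')
    {X : C} (hX : finrank k (Z.obj X) = 1 ∧ finrank k (Z'.obj X) = 1)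
    (hX' : Nonempty (𝟙_ C ⟶ X) ∧ Nonempty (X ⟶ 𝟙_ C)) :
    ∃ e : Z.obj X ≃ₗ[k] Z'.obj X, ∀ f : 𝟙_ C ⟶ X, e (stateVec Z f) = stateVec Z' f := by
  obtain ⟨⟨M⟩, ⟨N⟩⟩ := hX'
  obtain ⟨c, hc, hZ, hZ'⟩ := H2 (M ≫ N)
  have hM := stateVec_ne_zero_of_comp_eq_smul Z hc hZ
  obtain ⟨e, he⟩ := exists_linearEquiv_apply_eq_of_finrank_eq_one hX.1 hX.2 hM
    (stateVec_ne_zero_of_comp_eq_smul Z' hc hZ')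
  refine ⟨e, fun f => ?_⟩
  obtain ⟨a, ha⟩ := (finrank_eq_one_iff_of_nonzero' _ hM).mp hX.1 (stateVec Z f)
  rw [← ha, map_smul, he, stateVec_eq_smul_of_stateVec_eq_smul Z Z' H2 hX.2 N ha.symm]

end Transfer

section NatIso

variable {Z Z' : C ⥤ ModuleCat k} [Z.Monoidal] [Z'.Monoidal]
  (e : ∀ X : C, Z.obj X ≃ₗ[k] Z'.obj X)
  (he : ∀ (X : C) (f : 𝟙_ C ⟶ X), e X (stateVec Z f) = stateVec Z' f)
  (hspan : ∀ X : C, Submodule.span k (Set.range (stateVec Z (X := X))) = ⊤)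

noncomputable def natIsoOfMapStateVec : Z ≅ Z' :=
  NatIso.ofComponents (fun X => (e X).toModuleIso) fun {X Y} g =>
    ModuleCat.hom_ext <| LinearMap.ext_on_range (hspan X) fun f => by
      change e Y (Z.map g (stateVec Z f)) = Z'.map g (e X (stateVec Z f))
      rw [← stateVec_comp, he, he, stateVec_comp]

theorem isMonoidal_natIsoOfMapStateVec :
    NatTrans.IsMonoidal (natIsoOfMapStateVec e he hspan).hom where
  unit := by
    refine ModuleCat.hom_ext (LinearMap.ext_ring ?_)
    change e _ (unitVec Z) = unitVec Z'
    rw [← stateVec_id, he, stateVec_id]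
  tensor X Y := by
    refine ModuleCat.hom_ext (TensorProduct.ext_on_range (hspan X) (hspan Y) fun f g => ?_)
    change e _ (μ Z X Y (stateVec Z f ⊗ₜ stateVec Z g)) =
      μ Z' X Y (e X (stateVec Z f) ⊗ₜ e Y (stateVec Z g))
    rw [μ_stateVec_tmul, he, he, he, μ_stateVec_tmul]

end NatIso

end

/-- Abstract form of the paper's Theorem 3: under (H1)–(H3), the strong monoidal functors
`Z` and `Z'` are equivalent as monoidal functors, i.e. there is a monoidal natural
isomorphism `F : Z ≅ Z'`.  (Applied to `C = 4Cob`, any two TQFTs whose partition function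
on every closed oriented 4-manifold `M` is `y^{σ(M)}` with `y ≠ 0` are equivalent; hence
the BF theory with `y = exp(−36π²i/Λ)` is equivalent to the Crane–Yetter–Broda TQFT.) -/
theorem exists_monoidal_nat_iso {k : Type*} [Field k] {C : Type u} [Category.{v} C]
    [MonoidalCategory C] (Z Z' : C ⥤ ModuleCat k) [Z.Monoidal] [Z'.Monoidal]
    -- (H1): every object admits a morphism from and a morphism to the unit object
    (H1 : ∀ X : C, Nonempty (𝟙_ C ⟶ X) ∧ Nonempty (X ⟶ 𝟙_ C))
    -- (H2): for every `f : 𝟙 ⟶ 𝟙` the scalars `⟨Z(f)⟩` and `⟨Z'(f)⟩` agree and are nonzero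
    (H2 : ∀ f : 𝟙_ C ⟶ 𝟙_ C, ∃ c : k, c ≠ 0 ∧
      Z.map f (unitVec Z) = c • unitVec Z ∧ Z'.map f (unitVec Z') = c • unitVec Z')
    -- (H3): all state spaces are one-dimensional
    (H3 : ∀ X : C, Module.finrank k (Z.obj X) = 1 ∧ Module.finrank k (Z'.obj X) = 1) :
    ∃ F : Z ≅ Z', NatTrans.IsMonoidal F.hom := by
  choose e he using fun X => exists_linearEquiv_map_stateVec Z Z' H2 (H3 X) (H1 X)
  have hspan (X : C) : Submodule.span k (Set.range (stateVec Z (X := X))) = ⊤ := by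
    obtain ⟨⟨M⟩, ⟨N⟩⟩ := H1 X
    obtain ⟨c, hc, hZ, -⟩ := H2 (M ≫ N)
    exact span_range_stateVec_eq_top Z (H3 X).1 (stateVec_ne_zero_of_comp_eq_smul Z hc hZ)
  exact ⟨natIsoOfMapStateVec e he hspan, isMonoidal_natIsoOfMapStateVec e he hspan⟩
end

section
/- Let C be a braided monoidal category, X an object of C with a right dual Xᘁ (with evaluation ε_X : Xᘁ ⊗ X ⟶ 𝟙 and coevaluation η_X : 𝟙 ⟶ X ⊗ Xᘁ), and F : C ⥤ FGModuleCat k a braided strong monoidal functor. Then the endomorphism F(η_X ≫ β_{X,Xᘁ} ≫ ε_X) of F(𝟙), transported along the unit isomorphism k ≅ F(𝟙), is multiplication by the scalar (finrank_k F(X) : k). (This expresses that a TQFT valued in finite-dimensional vector spaces assigns to the 'quantum dimension' morphism of an object its state space's dimension, the mechanism behind dim Z(Σ) = Z(S¹ × Σ) in the proof of Theorem 3.) -/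
open CategoryTheory MonoidalCategory

universe w v u

/-!
A strong monoidal functor carries the coevaluation and evaluation of the exact pairing
`(X, Xd)` to a pairing of `F X` and `F Xd` which still satisfies the zig-zag identity
`(η ⊗ 1) ≫ (1 ⊗ ε) = 1`, and a braided one carries the quantum dimension `η ≫ β ≫ ε` to the quantum dimension of that pairing.
In vector spaces, a coevaluation `t ∈ V ⊗ W` and an evaluation `e : W ⊗ V → k` satisfying the
zig-zag identity give the endomorphism `v ↦ (1 ⊗ e)(t ⊗ v) = id_V`, whose trace is `e (β t)`;
hence `e (β t) = trace id_V = dim V`.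
-/

namespace TensorProduct

variable {k V W : Type*} [CommRing k] [AddCommGroup V] [Module k V] [AddCommGroup W] [Module k W]

noncomputable def endOfPairing (e : W ⊗[k] V →ₗ[k] k) : V ⊗[k] W →ₗ[k] (V →ₗ[k] V) :=
  dualTensorHom k V V ∘ₗ map (curry e) LinearMap.id ∘ₗ (TensorProduct.comm k V W).toLinearMap

lemma endOfPairing_tmul (e : W ⊗[k] V →ₗ[k] k) (x : V) (w : W) (v : V) :
    endOfPairing e (x ⊗ₜ w) v = e (w ⊗ₜ v) • x := by
  simp [endOfPairing]

lemma endOfPairing_apply (e : W ⊗[k] V →ₗ[k] k) (s : V ⊗[k] W) (v : V) :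
    endOfPairing e s v =
      TensorProduct.rid k V (e.lTensor V (TensorProduct.assoc k V W V (s ⊗ₜ v))) := by
  induction s using TensorProduct.induction_on with
  | zero => simp
  | tmul x w => simp [endOfPairing_tmul]
  | add s₁ s₂ h₁ h₂ => simp only [map_add, LinearMap.add_apply, add_tmul, h₁, h₂]

lemma trace_endOfPairing [Module.Free k V] [Module.Finite k V] (e : W ⊗[k] V →ₗ[k] k)
    (s : V ⊗[k] W) :
    LinearMap.trace k V (endOfPairing e s) = e (TensorProduct.comm k V W s) := by
  induction s using TensorProduct.induction_on with
  | zero => simp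
  | tmul x w => simp [endOfPairing, LinearMap.trace_eq_contract_apply]
  | add s₁ s₂ h₁ h₂ => simp only [map_add, h₁, h₂]

end TensorProduct

open Module TensorProduct in
lemma FGModuleCat.coevaluation_braiding_evaluation_eq_finrank {k : Type*} [Field k]
    {V W : FGModuleCat k} (c : 𝟙_ (FGModuleCat k) ⟶ V ⊗ W) (e : W ⊗ V ⟶ 𝟙_ (FGModuleCat k))
    (h : c ▷ V ≫ (α_ V W V).hom ≫ V ◁ e = (λ_ V).hom ≫ (ρ_ V).inv) :
    c ≫ (β_ V W).hom ≫ e = (finrank k V : k) • 𝟙 (𝟙_ (FGModuleCat k)) := by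
  have hid : endOfPairing (ConcreteCategory.hom e) (c (1 : k)) = LinearMap.id := by
    ext v
    calc endOfPairing (ConcreteCategory.hom e) (c (1 : k)) v
        = TensorProduct.rid k V (((λ_ V).hom ≫ (ρ_ V).inv) ((1 : k) ⊗ₜ v)) := by
          rw [endOfPairing_apply, ← h]; rfl
      _ = v := ((TensorProduct.rid k V).apply_symm_apply _).trans (one_smul k v)
  ext
  change e (TensorProduct.comm k V W (c (1 : k))) = (finrank k V : k) • (1 : k)
  rw [← trace_endOfPairing, hid, LinearMap.trace_id, smul_eq_mul, mul_one]

namespace CategoryTheory.Functor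

open LaxMonoidal OplaxMonoidal

variable {C D : Type*} [Category C] [MonoidalCategory C] [Category D] [MonoidalCategory D]
  (F : C ⥤ D) (X Y : C) [ExactPairing X Y]

def mapCoevaluation [F.LaxMonoidal] [F.OplaxMonoidal] : 𝟙_ D ⟶ F.obj X ⊗ F.obj Y :=
  ε F ≫ F.map (η_ X Y) ≫ δ F X Y

def mapEvaluation [F.LaxMonoidal] [F.OplaxMonoidal] : F.obj Y ⊗ F.obj X ⟶ 𝟙_ D :=
  μ F Y X ≫ F.map (ε_ X Y) ≫ η F

lemma mapEvaluation_mapCoevaluation [F.Monoidal] :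
    F.mapCoevaluation X Y ▷ F.obj X ≫ (α_ (F.obj X) (F.obj Y) (F.obj X)).hom ≫
      F.obj X ◁ F.mapEvaluation X Y = (λ_ (F.obj X)).hom ≫ (ρ_ (F.obj X)).inv := by
  have := congr(ε F ▷ F.obj X ≫ μ F (𝟙_ C) X ≫ F.map $(ExactPairing.evaluation_coevaluation X Y) ≫
    δ F X (𝟙_ C) ≫ F.obj X ◁ η F)
  simp only [Functor.map_comp, Monoidal.map_whiskerRight, Monoidal.map_whiskerLeft,
    Monoidal.map_associator, Monoidal.map_leftUnitor, Monoidal.map_rightUnitor_inv,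
    Category.assoc, Monoidal.μ_δ_assoc, Monoidal.whiskerRight_ε_η_assoc,
    Monoidal.whiskerLeft_ε_η, Category.comp_id] at this
  simpa only [mapCoevaluation, mapEvaluation, comp_whiskerRight, MonoidalCategory.whiskerLeft_comp,
    Category.assoc] using this

lemma map_coevaluation_braiding_evaluation [BraidedCategory C] [BraidedCategory D] [F.Braided] :
    ε F ≫ F.map (η_ X Y ≫ (β_ X Y).hom ≫ ε_ X Y) ≫ η F =
      F.mapCoevaluation X Y ≫ (β_ (F.obj X) (F.obj Y)).hom ≫ F.mapEvaluation X Y := by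
  simp only [mapCoevaluation, mapEvaluation, Functor.map_comp, map_braiding, Category.assoc]

end CategoryTheory.Functor

/-- Let `C` be a braided monoidal category, `X` an object with a right dual `Xd` (an exact
pairing: evaluation `ε_X : Xd ⊗ X ⟶ 𝟙` and coevaluation `η_X : 𝟙 ⟶ X ⊗ Xd` satisfying the
zig-zag identities), and `F : C ⥤ FGModuleCat k` a braided strong monoidal functor.  Then
the endomorphism `F(η_X ≫ β_{X,Xd} ≫ ε_X)` of `F(𝟙)`, transported along the unit
isomorphism `k ≅ F(𝟙)`, is multiplication by the scalar `(finrank k F(X) : k)`. -/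
theorem map_quantum_dimension_eq_finrank {k : Type u} [Field k]
    {C : Type w} [Category.{v} C] [MonoidalCategory C] [BraidedCategory C]
    (X Xd : C) [ExactPairing X Xd]
    (F : C ⥤ FGModuleCat k) [F.Braided] :
    Functor.LaxMonoidal.ε F ≫ F.map (η_ X Xd ≫ (β_ X Xd).hom ≫ ε_ X Xd) ≫
        Functor.OplaxMonoidal.η F =
      (Module.finrank k (F.obj X) : k) • 𝟙 (𝟙_ (FGModuleCat k)) := by
  rw [F.map_coevaluation_braiding_evaluation X Xd]
  exact FGModuleCat.coevaluation_braiding_evaluation_eq_finrank _ _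
    (F.mapEvaluation_mapCoevaluation X Xd)
end
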